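/- arXiv:1011.5237 — 2 statements merged into one kernel-verified Lean document; each statement's English description precedes it below -/
import Mathlib

section
/- Let P and Q be orthogonal projections on a complex Hilbert space H and let T = PQ. Then the subspace cl(R(T)) + N(T) is dense in H. -/
open ContinuousLinearMap Submodule LinearMap

variable {H : Type*} [NormedAddCommGroup H] [InnerProductSpace ℂ H] [CompleteSpace H]

/-- `P` is an orthogonal projection: `P² = P = P*`. -/
def IsOrthoProj (P : H →L[ℂ] H) : Prop :=
  P ∘L P = P ∧ ContinuousLinearMap.adjoint P = P

/-- The orthogonal projection onto a (complete, i.e. closed) subspace,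
as an operator on `H`. -/
noncomputable def projOn (K : Submodule ℂ H) [CompleteSpace K] : H →L[ℂ] H :=
  K.subtypeL.comp (orthogonalProjection K)

/-- The orthogonal projection onto a closed subspace, as an operator on `H`. -/
noncomputable def projOnc (K : Submodule ℂ H) (hK : IsClosed (K : Set H)) : H →L[ℂ] H :=
  haveI : CompleteSpace K := hK.completeSpace_coe
  K.subtypeL.comp (orthogonalProjection K)

/-!
Taking orthogonal complements, `cl R(T) + N(T)` is dense iff `N(T*) ∩ N(T)ᗮ = 0`, where
`T* = QP`. If `x` lies in both, then `x ⟂ N(Q) ⊆ N(PQ)` gives `Qx = x`, hence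
`‖Px‖² = ⟪Px, x⟫ = ⟪Px, Qx⟫ = ⟪QPx, x⟫ = 0`. So `Tx = Px = 0`, and `x ∈ N(T) ∩ N(T)ᗮ = 0`.
-/

namespace ContinuousLinearMap

variable {𝕜 E : Type*} [RCLike 𝕜] [NormedAddCommGroup E] [InnerProductSpace 𝕜 E] [CompleteSpace E]

theorem orthogonal_closure_range_sup_ker (T : E →L[𝕜] E) :
    ((LinearMap.range (T : E →ₗ[𝕜] E)).topologicalClosure ⊔ LinearMap.ker (T : E →ₗ[𝕜] E))ᗮ =
      LinearMap.ker (adjoint T : E →ₗ[𝕜] E) ⊓ (LinearMap.ker (T : E →ₗ[𝕜] E))ᗮ := by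
  rw [← inf_orthogonal, orthogonal_closure, orthogonal_range]

theorem IsStarProjection.orthogonal_ker {p : E →L[𝕜] E} (hp : IsStarProjection p) :
    (LinearMap.ker (p : E →ₗ[𝕜] E))ᗮ = LinearMap.range (p : E →ₗ[𝕜] E) := by
  have := hp.isSymmetricProjection.hasOrthogonalProjection_range
  rw [← hp.isStarNormal.orthogonal_range, orthogonal_orthogonal]

theorem IsStarProjection.apply_eq_self_of_mem_orthogonal_ker {p : E →L[𝕜] E}
    (hp : IsStarProjection p) {x : E} (hx : x ∈ (LinearMap.ker (p : E →ₗ[𝕜] E))ᗮ) : p x = x :=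
  hp.isIdempotentElem.toLinearMap.mem_range_iff.mp (hp.orthogonal_ker ▸ hx)

theorem IsStarProjection.inner_apply_apply {p : E →L[𝕜] E} (hp : IsStarProjection p) (x : E) :
    inner 𝕜 (p x) (p x) = inner 𝕜 (p x) x := by
  rw [← coe_coe, ← hp.isSelfAdjoint.isSymmetric, coe_coe, ← comp_apply, ← mul_def,
    hp.isIdempotentElem.eq]

theorem IsStarProjection.ker_mul_inf_orthogonal_ker_mul_eq_bot {p q : E →L[𝕜] E}
    (hp : IsStarProjection p) (hq : IsStarProjection q) :
    LinearMap.ker ((q * p : E →L[𝕜] E) : E →ₗ[𝕜] E) ⊓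
      (LinearMap.ker ((p * q : E →L[𝕜] E) : E →ₗ[𝕜] E))ᗮ = ⊥ := by
  refine eq_bot_iff.mpr fun x ⟨hqpx, hx⟩ ↦ ?_
  have hker : LinearMap.ker (q : E →ₗ[𝕜] E) ≤ LinearMap.ker ((p * q : E →L[𝕜] E) : E →ₗ[𝕜] E) :=
    fun y hy ↦ by simp_all
  have hqx : q x = x := hq.apply_eq_self_of_mem_orthogonal_ker (orthogonal_le hker hx)
  have hpx : p x = 0 := inner_self_eq_zero.mp <| calc
    inner 𝕜 (p x) (p x) = inner 𝕜 (p x) (q x) := by rw [hp.inner_apply_apply, hqx]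
    _ = inner 𝕜 (q (p x)) x := (hq.isSelfAdjoint.isSymmetric _ _).symm
    _ = 0 := by simp_all
  exact (inf_orthogonal_eq_bot _).le ⟨by simp [hqx, hpx], hx⟩

theorem IsStarProjection.dense_closure_range_sup_ker_mul {p q : E →L[𝕜] E}
    (hp : IsStarProjection p) (hq : IsStarProjection q) :
    Dense (((LinearMap.range ((p * q : E →L[𝕜] E) : E →ₗ[𝕜] E)).topologicalClosure ⊔
      LinearMap.ker ((p * q : E →L[𝕜] E) : E →ₗ[𝕜] E) : Submodule 𝕜 E) : Set E) := by
  rw [dense_iff_topologicalClosure_eq_top, topologicalClosure_eq_top_iff,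
    orthogonal_closure_range_sup_ker, ← star_eq_adjoint, star_mul, hp.isSelfAdjoint.star_eq,
    hq.isSelfAdjoint.star_eq]
  exact hp.ker_mul_inf_orthogonal_ker_mul_eq_bot hq

end ContinuousLinearMap

theorem IsOrthoProj.isStarProjection {P : H →L[ℂ] H} (hP : IsOrthoProj P) : IsStarProjection P :=
  ⟨hP.1, hP.2⟩

theorem stmt5 (P Q T : H →L[ℂ] H) (hP : IsOrthoProj P) (hQ : IsOrthoProj Q)
    (hT : T = P ∘L Q) :
    Dense (((LinearMap.range (T : H →ₗ[ℂ] H)).topologicalClosure ⊔ LinearMap.ker (T : H →ₗ[ℂ] H) : Submodule ℂ H) : Set H) := by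
  subst hT
  exact hP.isStarProjection.dense_closure_range_sup_ker_mul hQ.isStarProjection
end

section
/- Let E be a bounded idempotent operator (E² = E) on a Hilbert space H with polar decomposition E = V|E|. Then the Moore-Penrose pseudoinverse of E equals (V*)², and consequently E† is a product of two orthogonal projections: E† = P_{N(E)^⊥} P_{R(E)}. -/
open ContinuousLinearMap Submodule LinearMap

variable {H : Type*} [NormedAddCommGroup H] [InnerProductSpace ℂ H] [CompleteSpace H]

/-- `V` is a partial isometry: it is isometric on the orthogonal complement of its kernel. -/
def IsPartialIsometry (V : H →L[ℂ] H) : Prop :=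
  ∀ x ∈ (LinearMap.ker (V : H →ₗ[ℂ] H))ᗮ, ‖V x‖ = ‖x‖

/-!
Everything rests on one cancellation principle: an operator with range in `(ker C)ᗮ` is determined
by its composite with `C`. Put `K = ker E = ker V = ker |E|` (the last because `|E|² = E* E`).
The operators `|E|`, `V*` and `F E` all have range in `Kᗮ`, so each of
`|E| V |E| = |E|` (from `E² = E`), `V* E = |E|`, `V* |E| = F E` and `V* E F = V*`
can be checked after composing with `V` or `|E|`, where it is immediate.
Then `V* V* = V* V* E F = V* |E| F = F E F = F`.
Finally `F E` and `E F` are the orthogonal projections onto `Kᗮ` and `R(E)`, and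
`F = F E F = (F E)(E F)` because `E² = E`.
-/

open scoped InnerProduct

namespace ContinuousLinearMap

variable {𝕜 E F G : Type*} [RCLike 𝕜]
  [NormedAddCommGroup E] [InnerProductSpace 𝕜 E]
  [NormedAddCommGroup F] [InnerProductSpace 𝕜 F]
  [NormedAddCommGroup G] [InnerProductSpace 𝕜 G]

theorem eq_of_comp_eq_of_range_le_orthogonal_ker {A : F →L[𝕜] G} {T S : E →L[𝕜] F}
    (hT : T.range ≤ A.kerᗮ) (hS : S.range ≤ A.kerᗮ) (h : A ∘L T = A ∘L S) : T = S := by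
  ext x
  have hker : T x - S x ∈ A.ker := by simpa [sub_eq_zero] using congr($h x)
  have horth : T x - S x ∈ A.kerᗮ := sub_mem (hT ⟨x, rfl⟩) (hS ⟨x, rfl⟩)
  exact sub_eq_zero.mp (Submodule.disjoint_def.mp A.ker.orthogonal_disjoint _ hker horth)

variable [CompleteSpace E] [CompleteSpace F]

theorem range_adjoint_le_orthogonal_ker (T : E →L[𝕜] F) : T†.range ≤ T.kerᗮ := by
  rw [T.orthogonal_ker]
  exact Submodule.le_topologicalClosure _

theorem _root_.IsSelfAdjoint.range_le_orthogonal_ker {T : E →L[𝕜] E} (hT : IsSelfAdjoint T) :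
    T.range ≤ T.kerᗮ := by
  simpa only [hT.adjoint_eq] using T.range_adjoint_le_orthogonal_ker

theorem _root_.IsStarProjection.range_eq_orthogonal_ker {p : E →L[𝕜] E}
    (hp : IsStarProjection p) : p.range = p.kerᗮ := by
  have := IsIdempotentElem.hasOrthogonalProjection_range hp.isIdempotentElem
  rw [← p.range.orthogonal_orthogonal, p.orthogonal_range, hp.isSelfAdjoint.adjoint_eq]

section Polar

variable {A V : E →L[𝕜] F} {R : E →L[𝕜] E}

theorem ker_eq_of_comp_self_eq_adjoint_comp_self (hR : IsSelfAdjoint R)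
    (hRR : R ∘L R = A† ∘L A) : R.ker = A.ker := by
  rw [← A.ker_adjoint_comp_self, ← hRR, ← R.ker_adjoint_comp_self, hR.adjoint_eq]

theorem adjoint_comp_eq_of_polar (hR : IsSelfAdjoint R) (hRR : R ∘L R = A† ∘L A)
    (hAVR : A = V ∘L R) (hker : V.ker = A.ker) : V† ∘L A = R := by
  have hRker : R.ker = V.ker := by rw [hker, ker_eq_of_comp_self_eq_adjoint_comp_self hR hRR]
  refine eq_of_comp_eq_of_range_le_orthogonal_ker (A := R) ?_ hR.range_le_orthogonal_ker ?_
  · rw [hRker]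
    exact (LinearMap.range_comp_le_range _ _).trans V.range_adjoint_le_orthogonal_ker
  · rw [hRR, ← comp_assoc, ← hR.adjoint_eq, ← adjoint_comp, ← hAVR]

end Polar

section IdempotentPolar

variable {A V R B : E →L[𝕜] E}

theorem comp_comp_eq_self_of_polar_of_idempotent (hR : IsSelfAdjoint R)
    (hRR : R ∘L R = A† ∘L A) (hAVR : A = V ∘L R) (hker : V.ker = A.ker) (hAA : A ∘L A = A) :
    R ∘L V ∘L R = R := by
  have hRker : R.ker = V.ker := by rw [hker, ker_eq_of_comp_self_eq_adjoint_comp_self hR hRR]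
  have hRrange : R.range ≤ V.kerᗮ := hRker ▸ hR.range_le_orthogonal_ker
  refine eq_of_comp_eq_of_range_le_orthogonal_ker (A := V) ?_ hRrange ?_
  · exact (LinearMap.range_comp_le_range _ _).trans hRrange
  · rw [← hAVR, ← comp_assoc, ← hAVR, hAA]

theorem adjoint_comp_adjoint_eq_of_polar_of_idempotent (hR : IsSelfAdjoint R)
    (hRR : R ∘L R = A† ∘L A) (hAVR : A = V ∘L R) (hker : V.ker = A.ker) (hAA : A ∘L A = A)
    (hABA : A ∘L B ∘L A = A) (hBAB : B ∘L A ∘L B = B)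
    (hAB : IsSelfAdjoint (A ∘L B)) (hBA : IsSelfAdjoint (B ∘L A)) :
    V† ∘L V† = B := by
  have hRker : R.ker = A.ker := ker_eq_of_comp_self_eq_adjoint_comp_self hR hRR
  have hVA : V† ∘L A = R := adjoint_comp_eq_of_polar hR hRR hAVR hker
  have hRV : R ∘L V† = A† := by rw [← hR.adjoint_eq, ← adjoint_comp, ← hAVR]
  have hV_range : V†.range ≤ R.kerᗮ := hRker ▸ hker ▸ V.range_adjoint_le_orthogonal_ker
  have hRVR : R ∘L V† ∘L R = R := by
    simpa only [adjoint_comp, hR.adjoint_eq, comp_assoc] using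
      congr(($(comp_comp_eq_self_of_polar_of_idempotent hR hRR hAVR hker hAA))†)
  have hVR : V† ∘L R = B ∘L A := by
    refine eq_of_comp_eq_of_range_le_orthogonal_ker (A := R)
      ((LinearMap.range_comp_le_range _ _).trans hV_range) ?_ ?_
    · rw [← hBA.adjoint_eq, adjoint_comp, hRker]
      exact (LinearMap.range_comp_le_range _ _).trans A.range_adjoint_le_orthogonal_ker
    · rw [hRVR, ← hVA, comp_assoc, hABA]
  have hVAB : V† ∘L A ∘L B = V† := by
    refine eq_of_comp_eq_of_range_le_orthogonal_ker (A := R)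
      ((LinearMap.range_comp_le_range _ _).trans hV_range) hV_range ?_
    rw [← comp_assoc, hRV, ← hAB.adjoint_eq, ← adjoint_comp, comp_assoc, hABA]
  calc V† ∘L V† = V† ∘L (V† ∘L A) ∘L B := by rw [comp_assoc (V†) A B, hVAB]
    _ = B := by rw [hVA, ← comp_assoc, hVR, comp_assoc, hBAB]

end IdempotentPolar

section MoorePenrose

variable {A B : E →L[𝕜] E}

theorem isStarProjection_comp_of_comp_comp_eq_self (hABA : A ∘L B ∘L A = A)
    (hAB : IsSelfAdjoint (A ∘L B)) : IsStarProjection (A ∘L B) :=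
  ⟨by rw [IsIdempotentElem, mul_def, ← comp_assoc, comp_assoc A B A, hABA], hAB⟩

theorem comp_eq_starProjection_range [A.range.HasOrthogonalProjection]
    (hABA : A ∘L B ∘L A = A) (hAB : IsSelfAdjoint (A ∘L B)) :
    A ∘L B = A.range.starProjection := by
  refine (IsStarProjection.ext_iff (isStarProjection_comp_of_comp_comp_eq_self hABA hAB)
    isStarProjection_starProjection).mpr ?_
  rw [Submodule.range_starProjection]
  refine le_antisymm (LinearMap.range_comp_le_range _ _) ?_
  calc A.range = (A ∘L B ∘L A).range := by rw [hABA]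
    _ ≤ (A ∘L B).range := by
      rw [← comp_assoc, toLinearMap_comp]
      exact LinearMap.range_comp_le_range _ _

theorem comp_eq_starProjection_orthogonal_ker (hABA : A ∘L B ∘L A = A)
    (hBA : IsSelfAdjoint (B ∘L A)) : B ∘L A = A.kerᗮ.starProjection := by
  have hBA_proj : IsStarProjection (B ∘L A) := by
    refine ⟨?_, hBA⟩
    rw [IsIdempotentElem, mul_def, comp_assoc, hABA]
  refine (IsStarProjection.ext_iff hBA_proj isStarProjection_starProjection).mpr ?_
  rw [Submodule.range_starProjection, hBA_proj.range_eq_orthogonal_ker]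
  congr 1
  refine le_antisymm ?_ (LinearMap.ker_le_ker_comp _ _)
  calc (B ∘L A).ker ≤ (A ∘L B ∘L A).ker := by
        rw [toLinearMap_comp A]
        exact LinearMap.ker_le_ker_comp _ _
    _ = A.ker := by rw [hABA]

theorem eq_starProjection_comp_starProjection [A.range.HasOrthogonalProjection]
    (hAA : A ∘L A = A) (hABA : A ∘L B ∘L A = A) (hBAB : B ∘L A ∘L B = B)
    (hAB : IsSelfAdjoint (A ∘L B)) (hBA : IsSelfAdjoint (B ∘L A)) :
    B = A.kerᗮ.starProjection ∘L A.range.starProjection := by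
  rw [← comp_eq_starProjection_orthogonal_ker hABA hBA, ← comp_eq_starProjection_range hABA hAB,
    comp_assoc, ← comp_assoc A, hAA, hBAB]

end MoorePenrose

end ContinuousLinearMap

theorem stmt19_general (E F V absE : H →L[ℂ] H) (hidem : E ∘L E = E)
    (hker : LinearMap.ker (V : H →ₗ[ℂ] H) = LinearMap.ker (E : H →ₗ[ℂ] H))
    (habs_pos : absE.IsPositive)
    (habs_sq : absE ∘L absE = ContinuousLinearMap.adjoint E ∘L E)
    (hpolar : E = V ∘L absE)
    (hF1 : E ∘L F ∘L E = E) (hF2 : F ∘L E ∘L F = F)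
    (hF3 : IsSelfAdjoint (E ∘L F)) (hF4 : IsSelfAdjoint (F ∘L E)) :
    F = ContinuousLinearMap.adjoint V ∘L ContinuousLinearMap.adjoint V ∧
      ∃ hcl : IsClosed ((LinearMap.range (E : H →ₗ[ℂ] H) : Submodule ℂ H) : Set H),
        F = projOn (LinearMap.ker (E : H →ₗ[ℂ] H))ᗮ ∘L projOnc (LinearMap.range (E : H →ₗ[ℂ] H)) hcl := by
  have hcl : IsClosed (E.range : Set H) := IsIdempotentElem.isClosed_range hidem
  have : CompleteSpace E.range := hcl.completeSpace_coe
  exact ⟨(adjoint_comp_adjoint_eq_of_polar_of_idempotent habs_pos.isSelfAdjoint habs_sq hpolar hker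
    hidem hF1 hF2 hF3 hF4).symm, hcl, eq_starProjection_comp_starProjection hidem hF1 hF2 hF3 hF4⟩

theorem stmt19 (E F V absE : H →L[ℂ] H) (hidem : E ∘L E = E)
    (hV : IsPartialIsometry V) (hker : LinearMap.ker (V : H →ₗ[ℂ] H) = LinearMap.ker (E : H →ₗ[ℂ] H))
    (habs_pos : absE.IsPositive)
    (habs_sq : absE ∘L absE = ContinuousLinearMap.adjoint E ∘L E)
    (hpolar : E = V ∘L absE)
    (hF1 : E ∘L F ∘L E = E) (hF2 : F ∘L E ∘L F = F)
    (hF3 : IsSelfAdjoint (E ∘L F)) (hF4 : IsSelfAdjoint (F ∘L E)) :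
    F = ContinuousLinearMap.adjoint V ∘L ContinuousLinearMap.adjoint V ∧
      ∃ hcl : IsClosed ((LinearMap.range (E : H →ₗ[ℂ] H) : Submodule ℂ H) : Set H),
        F = projOn (LinearMap.ker (E : H →ₗ[ℂ] H))ᗮ ∘L projOnc (LinearMap.range (E : H →ₗ[ℂ] H)) hcl :=
  stmt19_general E F V absE hidem hker habs_pos habs_sq hpolar hF1 hF2 hF3 hF4
end
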